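/- Let d ≥ 2 be a real number. For every real ν with 0 < ν ≤ 1, g₂(ν,d) < ((1+√(1+4d))/2)·exp(−(1+2d−√(1+4d))/(4d)). -/
import Mathlib


/-- `h₁(ν,d) = (ν+1)² + 4ν²(d−1)`. -/
noncomputable def h1 (ν d : ℝ) : ℝ := (ν + 1) ^ 2 + 4 * ν ^ 2 * (d - 1)

/-- `h₂(ν,d) = ((ν+1)·√(h₁(ν,d)) − (ν+1)²)/(4ν²(d−1)) − 1/2`. -/
noncomputable def h2 (ν d : ℝ) : ℝ :=
  ((ν + 1) * Real.sqrt (h1 ν d) - (ν + 1) ^ 2) / (4 * ν ^ 2 * (d - 1)) - 1 / 2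

/-- `g₁(ν,α,d) = (ν + 1 + (d−1)·α·ν)·exp(−(ν² + (d−1)·α²)/2)`. -/
noncomputable def g1 (ν α d : ℝ) : ℝ :=
  (ν + 1 + (d - 1) * α * ν) * Real.exp (-(ν ^ 2 + (d - 1) * α ^ 2) / 2)

/-- `g₂(ν,d) = ((ν + 1 + √(h₁(ν,d)))/2)·exp(−ν²/2 + h₂(ν,d))`. -/
noncomputable def g2 (ν d : ℝ) : ℝ :=
  ((ν + 1 + Real.sqrt (h1 ν d)) / 2) * Real.exp (-ν ^ 2 / 2 + h2 ν d)

set_option maxHeartbeats 4000000 in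
/-- For real `d ≥ 2` and `0 < ν ≤ 1`,
`g₂(ν,d) < ((1+√(1+4d))/2)·exp(−(1+2d−√(1+4d))/(4d))`. -/
theorem stmt_12 (d : ℝ) (hd : 2 ≤ d) (ν : ℝ) (hν0 : 0 < ν) (hν1 : ν ≤ 1) :
    g2 ν d <
      ((1 + Real.sqrt (1 + 4 * d)) / 2) *
        Real.exp (-(1 + 2 * d - Real.sqrt (1 + 4 * d)) / (4 * d)) := by
  set r := Real.sqrt d with hr
  set s := Real.sqrt (1 + 4 * d) with hs
  set A := Real.sqrt (h1 ν d) with hA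
  set B := ν + 1 with hB
  have hB0 : (0:ℝ) < B := by positivity
  have hr2 : r ^ 2 = d := Real.sq_sqrt (by linarith)
  have hr0 : 0 < r := Real.sqrt_pos.mpr (by linarith)
  have hr1 : 1 ≤ r := by nlinarith
  have hs2 : s ^ 2 = 1 + 4 * d := Real.sq_sqrt (by linarith)
  have hs0 : 0 < s := Real.sqrt_pos.mpr (by linarith)
  have hs3 : 3 ≤ s := by nlinarith
  have hh1pos : 0 < h1 ν d := by unfold h1; nlinarith
  have hA2 : A ^ 2 = B ^ 2 + 4 * ν ^ 2 * (d - 1) := by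
    rw [hA, Real.sq_sqrt hh1pos.le]; rfl
  have hA0 : 0 ≤ A := Real.sqrt_nonneg _
  have hBA : B ≤ A := by nlinarith
  have hA0' : 0 < A := lt_of_lt_of_le hB0 hBA
  have hArB : A ≤ r * B := by
    have h1le : h1 ν d ≤ (r * B) ^ 2 := by
      have : (r * B) ^ 2 = d * B ^ 2 := by rw [mul_pow, hr2]
      rw [this]; unfold h1
      nlinarith [mul_nonneg (by linarith : (0:ℝ) ≤ d - 1)
        (by nlinarith : (0:ℝ) ≤ B ^ 2 - 4 * ν ^ 2)]
    calc A = Real.sqrt (h1 ν d) := hA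
      _ ≤ Real.sqrt ((r * B) ^ 2) := Real.sqrt_le_sqrt h1le
      _ = r * B := Real.sqrt_sq (by positivity)
  have hden : (0:ℝ) < 4 * ν ^ 2 * (d - 1) := by
    apply mul_pos (by positivity); linarith
  have hAB0 : (0:ℝ) < A + B := by linarith
  have hr1' : (0:ℝ) < r + 1 := by linarith
  have hs1' : (0:ℝ) < s + 1 := by linarith
  have hh2 : h2 ν d = B / (A + B) - 1 / 2 := by
    rw [h2, ← hA, ← hB]
    have : (B * A - B ^ 2) / (4 * ν ^ 2 * (d - 1)) = B / (A + B) := by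
      rw [div_eq_div_iff hden.ne' hAB0.ne']
      nlinarith [hA2]
    rw [this]
  have hrhs : -(1 + 2 * d - s) / (4 * d) = 1 / (s + 1) - 1 / 2 := by
    have h4d : (0:ℝ) < 4 * d := by linarith
    rw [div_sub_div _ _ hs1'.ne' (two_ne_zero), div_eq_div_iff h4d.ne' (by positivity)]
    nlinarith [hs2]
  rw [hrhs]
  have hg2 : g2 ν d =
      (B * Real.exp (-ν ^ 2 / 2)) * (((A + B) / 2 / B) * Real.exp (B / (A + B) - 1 / 2)) := by
    rw [g2, hh2, ← hA, ← hB, Real.exp_add]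
    field_simp
    ring
  rw [hg2]
  -- step B : B * exp(-ν²/2) < 1.37
  have hstepB : B * Real.exp (-ν ^ 2 / 2) < 1.37 := by
    have h1' : B < 1.37 * (1 + ν ^ 2 / 2) := by nlinarith [sq_nonneg (1.37 * ν - 1)]
    have h2' : 1 + ν ^ 2 / 2 ≤ Real.exp (ν ^ 2 / 2) := by
      have := Real.add_one_le_exp (ν ^ 2 / 2); linarith
    have h3' : B < 1.37 * Real.exp (ν ^ 2 / 2) := by nlinarith
    have hmul : Real.exp (-ν ^ 2 / 2) * Real.exp (ν ^ 2 / 2) = 1 := by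
      rw [← Real.exp_add, show -ν ^ 2 / 2 + ν ^ 2 / 2 = 0 by ring, Real.exp_zero]
    nlinarith [mul_lt_mul_of_pos_right h3' (Real.exp_pos (-ν ^ 2 / 2)), hmul,
      Real.exp_pos (-ν ^ 2 / 2)]
  -- step A
  have hstepA : ((A + B) / 2 / B) * Real.exp (B / (A + B) - 1 / 2)
      ≤ ((1 + r) / 2) * Real.exp (1 / (r + 1) - 1 / 2) := by
    have hx : Real.exp (1 / (r + 1) - 1 / 2) =
        Real.exp (B / (A + B) - 1 / 2) * Real.exp (1 / (r + 1) - B / (A + B)) := by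
      rw [← Real.exp_add]; ring_nf
    have hexp : 1 + (1 / (r + 1) - B / (A + B)) ≤ Real.exp (1 / (r + 1) - B / (A + B)) := by
      have := Real.add_one_le_exp (1 / (r + 1) - B / (A + B)); linarith
    have expand : ((1 + r) / 2) * (1 + (1 / (r + 1) - B / (A + B))) - (A + B) / 2 / B
        = A * (r * B - A) / (2 * B * (A + B)) := by
      field_simp
      ring
    have hpoly : (A + B) / 2 / B ≤ ((1 + r) / 2) * (1 + (1 / (r + 1) - B / (A + B))) := by
      nlinarith [expand, div_nonneg (mul_nonneg hA0 (by linarith : (0:ℝ) ≤ r * B - A))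
        (by positivity : (0:ℝ) ≤ 2 * B * (A + B))]
    calc ((A + B) / 2 / B) * Real.exp (B / (A + B) - 1 / 2)
        ≤ (((1 + r) / 2) * (1 + (1 / (r + 1) - B / (A + B)))) * Real.exp (B / (A + B) - 1 / 2) :=
          mul_le_mul_of_nonneg_right hpoly (Real.exp_pos _).le
      _ ≤ (((1 + r) / 2) * Real.exp (1 / (r + 1) - B / (A + B))) * Real.exp (B / (A + B) - 1 / 2) := by
          have : (0:ℝ) ≤ (1 + r) / 2 := by linarith
          nlinarith [mul_le_mul_of_nonneg_left hexp this, (Real.exp_pos (B / (A + B) - 1 / 2)).le]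
      _ = ((1 + r) / 2) * Real.exp (1 / (r + 1) - 1 / 2) := by
          rw [hx]; ring
  -- step C
  have hstepC : 1.37 * (((1 + r) / 2) * Real.exp (1 / (r + 1) - 1 / 2))
      < ((1 + s) / 2) * Real.exp (1 / (s + 1) - 1 / 2) := by
    have hy : Real.exp (1 / (s + 1) - 1 / 2) =
        Real.exp (1 / (r + 1) - 1 / 2) * Real.exp (1 / (s + 1) - 1 / (r + 1)) := by
      rw [← Real.exp_add]; ring_nf
    have hexp : 1 + (1 / (s + 1) - 1 / (r + 1)) ≤ Real.exp (1 / (s + 1) - 1 / (r + 1)) := by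
      have := Real.add_one_le_exp (1 / (s + 1) - 1 / (r + 1)); linarith
    have hr141 : (1.41:ℝ) ≤ r := by nlinarith
    have hrs : 0.37 + 0.74 * r + 1.37 * r ^ 2 < r * s := by
      have hs2' : s ^ 2 = 1 + 4 * r ^ 2 := by rw [hs2, hr2]
      have hsqlt : (1.37 * r ^ 2 + 0.74 * r + 0.37) ^ 2 < (r * s) ^ 2 := by
        have h' : (r * s) ^ 2 = r ^ 2 * (1 + 4 * r ^ 2) := by
          rw [mul_pow, hs2']
        rw [h']
        nlinarith [mul_nonneg (by linarith : (0:ℝ) ≤ r - 1.41) (by positivity : (0:ℝ) ≤ r ^ 3),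
          mul_nonneg (by linarith : (0:ℝ) ≤ r - 1.41) (by positivity : (0:ℝ) ≤ r ^ 2),
          mul_nonneg (by linarith : (0:ℝ) ≤ r - 1.41) hr0.le,
          mul_nonneg (by nlinarith : (0:ℝ) ≤ r ^ 2 - 2) (by positivity : (0:ℝ) ≤ r ^ 2)]
      nlinarith [hsqlt, mul_pos hr0 hs0]
    have hpoly : 1.37 * ((1 + r) / 2) < ((1 + s) / 2) * (1 + (1 / (s + 1) - 1 / (r + 1))) := by
      have key : 1.37 * ((1 + r) / 2) * (r + 1)
          < (((1 + s) / 2) * (1 + (1 / (s + 1) - 1 / (r + 1)))) * (r + 1) := by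
        have expand : (((1 + s) / 2) * (1 + (1 / (s + 1) - 1 / (r + 1)))) * (r + 1)
            = ((1 + s) * (r + 1) + (r - s)) / 2 := by
          field_simp
          ring
        rw [expand]
        nlinarith [hrs]
      exact lt_of_mul_lt_mul_right key hr1'.le
    calc 1.37 * (((1 + r) / 2) * Real.exp (1 / (r + 1) - 1 / 2))
        = (1.37 * ((1 + r) / 2)) * Real.exp (1 / (r + 1) - 1 / 2) := by ring
      _ < (((1 + s) / 2) * (1 + (1 / (s + 1) - 1 / (r + 1)))) * Real.exp (1 / (r + 1) - 1 / 2) :=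
          mul_lt_mul_of_pos_right hpoly (Real.exp_pos _)
      _ ≤ (((1 + s) / 2) * Real.exp (1 / (s + 1) - 1 / (r + 1))) * Real.exp (1 / (r + 1) - 1 / 2) := by
          have h1s : (0:ℝ) ≤ (1 + s) / 2 := by linarith
          nlinarith [mul_le_mul_of_nonneg_left hexp h1s, (Real.exp_pos (1 / (r + 1) - 1 / 2)).le]
      _ = ((1 + s) / 2) * Real.exp (1 / (s + 1) - 1 / 2) := by
          rw [hy]; ring
  have hPpos : 0 < ((A + B) / 2 / B) * Real.exp (B / (A + B) - 1 / 2) := by positivity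
  calc (B * Real.exp (-ν ^ 2 / 2)) * (((A + B) / 2 / B) * Real.exp (B / (A + B) - 1 / 2))
      < 1.37 * (((A + B) / 2 / B) * Real.exp (B / (A + B) - 1 / 2)) :=
        mul_lt_mul_of_pos_right hstepB hPpos
    _ ≤ 1.37 * (((1 + r) / 2) * Real.exp (1 / (r + 1) - 1 / 2)) := by
        apply mul_le_mul_of_nonneg_left hstepA (by norm_num)
    _ < ((1 + s) / 2) * Real.exp (1 / (s + 1) - 1 / 2) := hstepC
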